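/- arXiv:2004.12199 — 6 statements merged into one kernel-verified Lean document; each statement's English description precedes it below -/
import Mathlib

section
/- The unique minimizer x̂ of the network Lasso objective h satisfies 0 ≤ x̂_i ≤ 1 for every node i ∈ V. -/
/-!
Clamping a signal pointwise to `[0, 1]` is a `1`-Lipschitz operation, so it does not increase the total
variation, and it moves every value closer to both `0` and `1`, strictly so for a value outside
`[0, 1]`. A minimizer with a value outside `[0, 1]` would therefore be beaten by its clamp.
-/

open Finset

/-- Total variation of a graph signal `x` w.r.t. oriented edge set `E` and weights `W`. -/
noncomputable def TV {n : ℕ} (E : Finset (Fin n × Fin n)) (W : Fin n × Fin n → ℝ)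
    (x : Fin n → ℝ) : ℝ :=
  ∑ e ∈ E, W e * |x e.1 - x e.2|

/-- The network Lasso objective. -/
noncomputable def nLasso {n : ℕ} (E : Finset (Fin n × Fin n)) (W : Fin n × Fin n → ℝ)
    (S : Finset (Fin n)) (α lam : ℝ) (x : Fin n → ℝ) : ℝ :=
  ∑ i ∈ S, (x i - 1) ^ 2 / 2 + ∑ i ∈ Sᶜ, α * x i ^ 2 / 2 + lam * TV E W x

/-- Divergence of the flow `y` at node `i`: outgoing minus incoming flow. -/
noncomputable def divg {n : ℕ} (E : Finset (Fin n × Fin n)) (y : Fin n × Fin n → ℝ)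
    (i : Fin n) : ℝ :=
  ∑ e ∈ E.filter (fun e => e.1 = i), y e - ∑ e ∈ E.filter (fun e => e.2 = i), y e

/-- The dual (flow) objective of the network Lasso. -/
noncomputable def dualObj {n : ℕ} (E : Finset (Fin n × Fin n)) (S : Finset (Fin n))
    (α : ℝ) (y : Fin n × Fin n → ℝ) : ℝ :=
  -∑ i ∈ S, (divg E y i ^ 2 / 2 - divg E y i) - ∑ i ∈ Sᶜ, divg E y i ^ 2 / (2 * α)

/-- The boundary of a node set `C`: edges with exactly one endpoint in `C`. -/
def bdry {n : ℕ} (E : Finset (Fin n × Fin n)) (C : Finset (Fin n)) :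
    Finset (Fin n × Fin n) :=
  E.filter (fun e => (e.1 ∈ C ∧ e.2 ∉ C) ∨ (e.1 ∉ C ∧ e.2 ∈ C))

section ProjIcc

open Set

variable {α : Type*} [Ring α] [LinearOrder α] [IsStrictOrderedRing α] {a b c : α}

theorem sq_projIcc_sub_le (h : a ≤ b) (hc : c ∈ Icc a b) (x : α) :
    ((projIcc a b h x : α) - c) ^ 2 ≤ (x - c) ^ 2 := by
  simpa [sq_le_sq, projIcc_of_mem h hc] using abs_projIcc_sub_projIcc h (c := x) (d := c)

theorem sq_projIcc_sub_lt (h : a ≤ b) (hc : c ∈ Icc a b) {x : α} (hx : x ∉ Icc a b) :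
    ((projIcc a b h x : α) - c) ^ 2 < (x - c) ^ 2 := by
  rw [sq_lt_sq, abs_sub_comm, abs_sub_comm x]
  rcases not_and_or.1 hx with hxa | hxb
  · rw [projIcc_of_le_left h (le_of_not_ge hxa), abs_of_nonneg (sub_nonneg.2 hc.1),
      abs_of_nonneg (sub_nonneg.2 (hc.1.trans' (le_of_not_ge hxa)))]
    exact sub_lt_sub_left (lt_of_not_ge hxa) c
  · rw [projIcc_of_right_le h (le_of_not_ge hxb), abs_of_nonpos (sub_nonpos.2 hc.2),
      abs_of_nonpos (sub_nonpos.2 (hc.2.trans (le_of_not_ge hxb)))]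
    exact neg_lt_neg (sub_lt_sub_left (lt_of_not_ge hxb) c)

end ProjIcc

theorem TV_comp_le {n : ℕ} {E : Finset (Fin n × Fin n)} {W : Fin n × Fin n → ℝ}
    (hW : ∀ e ∈ E, 0 ≤ W e) {f : ℝ → ℝ} (hf : LipschitzWith 1 f) (x : Fin n → ℝ) :
    TV E W (f ∘ x) ≤ TV E W x := by
  refine sum_le_sum fun e he => mul_le_mul_of_nonneg_left ?_ (hW e he)
  simpa [Real.dist_eq] using hf.dist_le_mul (x e.1) (x e.2)

theorem nLasso_lt_nLasso {n : ℕ} (E : Finset (Fin n × Fin n)) (W : Fin n × Fin n → ℝ)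
    (S : Finset (Fin n)) {α lam : ℝ} (hα : 0 < α) (hlam : 0 ≤ lam) {x z : Fin n → ℝ}
    (hTV : TV E W z ≤ TV E W x) (hseed : ∀ j, (z j - 1) ^ 2 ≤ (x j - 1) ^ 2)
    (hrest : ∀ j, z j ^ 2 ≤ x j ^ 2) {i : Fin n} (hseed_i : (z i - 1) ^ 2 < (x i - 1) ^ 2)
    (hrest_i : z i ^ 2 < x i ^ 2) :
    nLasso E W S α lam z < nLasso E W S α lam x := by
  have hterm_le : ∀ j, α * z j ^ 2 / 2 ≤ α * x j ^ 2 / 2 := fun j => by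
    have := mul_le_mul_of_nonneg_left (hrest j) hα.le; linarith
  have hTV' := mul_le_mul_of_nonneg_left hTV hlam
  unfold nLasso
  by_cases hi : i ∈ S
  · have := sum_lt_sum (fun j _ => div_le_div_of_nonneg_right (hseed j) two_pos.le)
      ⟨i, hi, div_lt_div_of_pos_right hseed_i two_pos⟩
    have := sum_le_sum fun j (_ : j ∈ Sᶜ) => hterm_le j
    linarith
  · have := sum_le_sum fun j (_ : j ∈ S) => div_le_div_of_nonneg_right (hseed j) two_pos.le
    have := sum_lt_sum (fun j (_ : j ∈ Sᶜ) => hterm_le j)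
      ⟨i, mem_compl.2 hi, by have := mul_lt_mul_of_pos_left hrest_i hα; linarith⟩
    linarith

theorem nLasso_minimizer_mem_unit_interval_general
    (n : ℕ) (E : Finset (Fin n × Fin n))
    (W : Fin n × Fin n → ℝ) (hW : ∀ e ∈ E, 0 < W e)
    (S : Finset (Fin n))
    (α lam : ℝ) (hα : 0 < α) (hlam : 0 < lam)
    (xhat : Fin n → ℝ)
    (hmin : ∀ z : Fin n → ℝ, nLasso E W S α lam xhat ≤ nLasso E W S α lam z) :
    ∀ i : Fin n, 0 ≤ xhat i ∧ xhat i ≤ 1 := by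
  intro i
  by_contra hi
  have h01 : (0 : ℝ) ≤ 1 := zero_le_one
  have h0 : (0 : ℝ) ∈ Set.Icc 0 1 := Set.left_mem_Icc.2 h01
  have h1 : (1 : ℝ) ∈ Set.Icc 0 1 := Set.right_mem_Icc.2 h01
  have hclamp : LipschitzWith 1 (Subtype.val ∘ Set.projIcc (0 : ℝ) 1 h01) := by
    simpa using LipschitzWith.subtype_val _ |>.comp (LipschitzWith.projIcc h01)
  refine (hmin (Subtype.val ∘ Set.projIcc 0 1 h01 ∘ xhat)).not_gt <|
    nLasso_lt_nLasso E W S hα hlam.le (TV_comp_le (fun e he => (hW e he).le) hclamp xhat)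
      (fun j => sq_projIcc_sub_le h01 h1 (xhat j))
      (fun j => by simpa using sq_projIcc_sub_le h01 h0 (xhat j))
      (sq_projIcc_sub_lt h01 h1 hi) (by simpa using sq_projIcc_sub_lt h01 h0 hi)

/-- Any minimizer of the nLasso objective takes values in `[0,1]`. -/
theorem nLasso_minimizer_mem_unit_interval
    (n : ℕ) (E : Finset (Fin n × Fin n)) (hE : ∀ e ∈ E, e.1 < e.2)
    (W : Fin n × Fin n → ℝ) (hW : ∀ e ∈ E, 0 < W e)
    (S : Finset (Fin n)) (hS : S.Nonempty)
    (α lam : ℝ) (hα : 0 < α) (hlam : 0 < lam)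
    (xhat : Fin n → ℝ)
    (hmin : ∀ z : Fin n → ℝ, nLasso E W S α lam xhat ≤ nLasso E W S α lam z) :
    ∀ i : Fin n, 0 ≤ xhat i ∧ xhat i ≤ 1 :=
  nLasso_minimizer_mem_unit_interval_general n E W hW S α lam hα hlam xhat hmin
end

section
/- Strong duality holds between the network Lasso problem and its flow-based dual: the minimum over x : V → ℝ of h(x) equals the maximum over all feasible flows y (those with |y_e| ≤ λ W_e for every e ∈ E) of the dual objective D(y) = − Σ_{i∈S} (div_i(y)²/2 − div_i(y)) − Σ_{i∉S} div_i(y)²/(2α), and both the minimum and the maximum are attained. -/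
open Finset

/-!
The dual objective depends on the flow only through its divergence `d`, and is a concave
quadratic in `d`. A maximiser `ŷ` over the (compact) box of feasible flows exists; the gradient
of the dual with respect to `d i` is the candidate primal signal `x̂ i = 1 - d i` on `S` and
`x̂ i = -d i / α` off `S`. Perturbing `ŷ` along a single edge `e` and using maximality in that
coordinate gives complementary slackness `ŷ e (x̂ e.1 - x̂ e.2) = λ W e |x̂ e.1 - x̂ e.2|`.
Finally the duality gap is a sum of squares vanishing at `x̂`, plus the slack
`λ TV x - Σ y e (x e.1 - x e.2)`, which is nonnegative for feasible `y` and zero at `(x̂, ŷ)`.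
-/

lemma nonpos_of_forall_mul_sub_sq_mul_nonpos {D K : ℝ} (hK : 0 ≤ K)
    (h : ∀ s ∈ Set.Ioc (0 : ℝ) 1, s * D - s ^ 2 * K ≤ 0) : D ≤ 0 := by
  by_contra! hD
  set s := min 1 (D / (K + 1))
  have hs_pos : 0 < s := lt_min one_pos (by positivity)
  have hs_le : s * (K + 1) ≤ D := (le_div_iff₀ (by linarith)).mp (min_le_right _ _)
  have hsD : s * (D - s * K) ≤ 0 := by nlinarith [h s ⟨hs_pos, min_le_left _ _⟩]
  nlinarith [(mul_nonpos_iff_pos_imp_nonpos.mp hsD).1 hs_pos]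

/-- A maximiser `a` of `t ↦ (t - a) g - κ (t - a)²` on `[-b, b]` sits at the end `b · sign g`. -/
lemma mul_eq_mul_abs_of_forall_Icc {a b g κ : ℝ} (hκ : 0 ≤ κ) (ha : a ∈ Set.Icc (-b) b)
    (h : ∀ t ∈ Set.Icc (-b) b, (t - a) * g - κ * (t - a) ^ 2 ≤ 0) :
    a * g = b * |g| := by
  have hb : 0 ≤ b := by linarith [ha.1, ha.2]
  obtain ⟨t, ht_mem, htg⟩ : ∃ t ∈ Set.Icc (-b) b, t * g = b * |g| := by
    rcases le_or_gt 0 g with hg | hg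
    · exact ⟨b, ⟨by linarith, le_rfl⟩, by rw [abs_of_nonneg hg]⟩
    · exact ⟨-b, ⟨le_rfl, by linarith⟩, by rw [abs_of_neg hg]; ring⟩
  have hseg : (t - a) * g ≤ 0 := by
    refine nonpos_of_forall_mul_sub_sq_mul_nonpos (K := κ * (t - a) ^ 2) (by positivity)
      fun s hs => ?_
    have := h _ ((convex_Icc (-b) b).add_smul_sub_mem ha ht_mem ⟨hs.1.le, hs.2⟩)
    simp only [smul_eq_mul, add_sub_cancel_left] at this
    linarith
  have hag : a * g ≤ b * |g| :=
    (le_abs_self _).trans <| by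
      rw [abs_mul]; exact mul_le_mul_of_nonneg_right (abs_le.mpr ha) (abs_nonneg g)
  linarith

section Flows

variable {n : ℕ} (E : Finset (Fin n × Fin n))

lemma divg_congr {y z : Fin n × Fin n → ℝ} (h : ∀ e ∈ E, y e = z e) :
    divg E y = divg E z := by
  ext i
  unfold divg
  congr 1 <;> exact Finset.sum_congr rfl fun e he => h e (Finset.mem_filter.mp he).1

lemma divg_add_smul (y z : Fin n × Fin n → ℝ) (s : ℝ) (i : Fin n) :
    divg E (y + s • z) i = divg E y i + s * divg E z i := by
  simp only [divg, Pi.add_apply, Pi.smul_apply, smul_eq_mul, Finset.sum_add_distrib,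
    ← Finset.mul_sum]
  ring

lemma sum_mul_divg (x : Fin n → ℝ) (y : Fin n × Fin n → ℝ) :
    ∑ i, x i * divg E y i = ∑ e ∈ E, y e * (x e.1 - x e.2) := by
  have fiber (p : Fin n × Fin n → Fin n) :
      ∑ i, x i * ∑ e ∈ E.filter (fun e => p e = i), y e = ∑ e ∈ E, y e * x (p e) := by
    rw [← Finset.sum_fiberwise E p]
    refine Finset.sum_congr rfl fun i _ => ?_
    rw [Finset.mul_sum]
    exact Finset.sum_congr rfl fun e he => by rw [(Finset.mem_filter.mp he).2, mul_comm]
  simp only [divg, mul_sub, Finset.sum_sub_distrib, fiber Prod.fst, fiber Prod.snd]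

lemma sum_single_mul_sub {e : Fin n × Fin n} (he : e ∈ E) (x : Fin n → ℝ) :
    ∑ e' ∈ E, (Pi.single e 1 : Fin n × Fin n → ℝ) e' * (x e'.1 - x e'.2) = x e.1 - x e.2 := by
  rw [Finset.sum_eq_single_of_mem e he fun e' _ hne => by simp [hne]]
  simp

lemma sum_mul_sub_le_mul_TV {W : Fin n × Fin n → ℝ} {lam : ℝ} {y : Fin n × Fin n → ℝ}
    (hy : ∀ e ∈ E, |y e| ≤ lam * W e) (x : Fin n → ℝ) :
    ∑ e ∈ E, y e * (x e.1 - x e.2) ≤ lam * TV E W x := by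
  rw [TV, Finset.mul_sum]
  refine Finset.sum_le_sum fun e he => ?_
  calc y e * (x e.1 - x e.2) ≤ |y e| * |x e.1 - x e.2| := by rw [← abs_mul]; exact le_abs_self _
    _ ≤ lam * W e * |x e.1 - x e.2| := mul_le_mul_of_nonneg_right (hy e he) (abs_nonneg _)
    _ = lam * (W e * |x e.1 - x e.2|) := mul_assoc _ _ _

end Flows

section Duality

variable {n : ℕ} (E : Finset (Fin n × Fin n)) (W : Fin n × Fin n → ℝ) (S : Finset (Fin n))
  {α : ℝ} (lam : ℝ)

/-- The gradient of the dual objective with respect to the divergence `d`. -/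
noncomputable def recoverPrimal (S : Finset (Fin n)) (α : ℝ) (d : Fin n → ℝ) : Fin n → ℝ :=
  fun i => if i ∈ S then 1 - d i else -d i / α

lemma dualObj_add_smul (hα : α ≠ 0) (y z : Fin n × Fin n → ℝ) (s : ℝ) :
    dualObj E S α (y + s • z) = dualObj E S α y
      + s * ∑ i, recoverPrimal S α (divg E y) i * divg E z i
      - s ^ 2 * (∑ i ∈ S, divg E z i ^ 2 / 2 + ∑ i ∈ Sᶜ, divg E z i ^ 2 / (2 * α)) := by
  have hS : ∑ i ∈ S, ((divg E y i + s * divg E z i) ^ 2 / 2 - (divg E y i + s * divg E z i))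
      = ∑ i ∈ S, (divg E y i ^ 2 / 2 - divg E y i)
        - s * ∑ i ∈ S, recoverPrimal S α (divg E y) i * divg E z i
        + s ^ 2 * ∑ i ∈ S, divg E z i ^ 2 / 2 := by
    rw [Finset.mul_sum, Finset.mul_sum, ← Finset.sum_sub_distrib, ← Finset.sum_add_distrib]
    refine Finset.sum_congr rfl fun i hi => ?_
    simp only [recoverPrimal, if_pos hi]
    ring
  have hSc : ∑ i ∈ Sᶜ, (divg E y i + s * divg E z i) ^ 2 / (2 * α)
      = ∑ i ∈ Sᶜ, divg E y i ^ 2 / (2 * α)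
        - s * ∑ i ∈ Sᶜ, recoverPrimal S α (divg E y) i * divg E z i
        + s ^ 2 * ∑ i ∈ Sᶜ, divg E z i ^ 2 / (2 * α) := by
    rw [Finset.mul_sum, Finset.mul_sum, ← Finset.sum_sub_distrib, ← Finset.sum_add_distrib]
    refine Finset.sum_congr rfl fun i hi => ?_
    simp only [recoverPrimal, if_neg (Finset.mem_compl.mp hi)]
    field_simp
    ring
  simp only [dualObj, divg_add_smul, hS, hSc,
    ← Finset.sum_add_sum_compl S fun i => recoverPrimal S α (divg E y) i * divg E z i]
  ring

/-- The node sums are the Fenchel–Young gaps of the quadratic node terms. -/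
lemma nLasso_sub_dualObj (hα : α ≠ 0) (x : Fin n → ℝ) (y : Fin n × Fin n → ℝ) :
    nLasso E W S α lam x - dualObj E S α y
      = ∑ i ∈ S, (x i - 1 + divg E y i) ^ 2 / 2
        + ∑ i ∈ Sᶜ, (α * x i + divg E y i) ^ 2 / (2 * α)
        + (lam * TV E W x - ∑ e ∈ E, y e * (x e.1 - x e.2)) := by
  have hS : ∑ i ∈ S, (x i - 1 + divg E y i) ^ 2 / 2
      = ∑ i ∈ S, (x i - 1) ^ 2 / 2 + ∑ i ∈ S, (divg E y i ^ 2 / 2 - divg E y i)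
        + ∑ i ∈ S, x i * divg E y i := by
    rw [← Finset.sum_add_distrib, ← Finset.sum_add_distrib]
    exact Finset.sum_congr rfl fun i _ => by ring
  have hSc : ∑ i ∈ Sᶜ, (α * x i + divg E y i) ^ 2 / (2 * α)
      = ∑ i ∈ Sᶜ, α * x i ^ 2 / 2 + ∑ i ∈ Sᶜ, divg E y i ^ 2 / (2 * α)
        + ∑ i ∈ Sᶜ, x i * divg E y i := by
    rw [← Finset.sum_add_distrib, ← Finset.sum_add_distrib]
    exact Finset.sum_congr rfl fun i _ => by field_simp; ring
  rw [← sum_mul_divg, ← Finset.sum_add_sum_compl S, hS, hSc, nLasso, dualObj]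
  ring

lemma dualObj_le_nLasso (hα : 0 < α) {y : Fin n × Fin n → ℝ}
    (hy : ∀ e ∈ E, |y e| ≤ lam * W e) (x : Fin n → ℝ) :
    dualObj E S α y ≤ nLasso E W S α lam x := by
  have hgap := nLasso_sub_dualObj E W S lam hα.ne' x y
  have hS : 0 ≤ ∑ i ∈ S, (x i - 1 + divg E y i) ^ 2 / 2 :=
    Finset.sum_nonneg fun i _ => by positivity
  have hSc : 0 ≤ ∑ i ∈ Sᶜ, (α * x i + divg E y i) ^ 2 / (2 * α) :=
    Finset.sum_nonneg fun i _ => by positivity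
  linarith [sum_mul_sub_le_mul_TV E hy x]

lemma nLasso_recoverPrimal_eq_dualObj (hα : α ≠ 0) {y : Fin n × Fin n → ℝ}
    (hslack : ∑ e ∈ E, y e * (recoverPrimal S α (divg E y) e.1 - recoverPrimal S α (divg E y) e.2)
      = lam * TV E W (recoverPrimal S α (divg E y))) :
    nLasso E W S α lam (recoverPrimal S α (divg E y)) = dualObj E S α y := by
  have hgap := nLasso_sub_dualObj E W S lam hα (recoverPrimal S α (divg E y)) y
  have hS : ∑ i ∈ S, (recoverPrimal S α (divg E y) i - 1 + divg E y i) ^ 2 / 2 = 0 :=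
    Finset.sum_eq_zero fun i hi => by simp [recoverPrimal, hi]
  have hSc : ∑ i ∈ Sᶜ, (α * recoverPrimal S α (divg E y) i + divg E y i) ^ 2 / (2 * α) = 0 :=
    Finset.sum_eq_zero fun i hi => by
      simp [recoverPrimal, Finset.mem_compl.mp hi, mul_div_cancel₀ _ hα]
  linarith

end Duality

section FlowBox

variable {n : ℕ} (E : Finset (Fin n × Fin n)) (c : Fin n × Fin n → ℝ)

/-- Every feasible flow agrees on `E` with a point of this compact box, and the dual objective
only sees values on `E`. -/
def flowBox : Set (Fin n × Fin n → ℝ) :=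
  Set.univ.pi fun e => if e ∈ E then Set.Icc (-c e) (c e) else {0}

lemma isCompact_flowBox : IsCompact (flowBox E c) :=
  isCompact_univ_pi fun e => by
    split_ifs
    exacts [isCompact_Icc, isCompact_singleton]

variable {E c}

lemma abs_le_of_mem_flowBox {y : Fin n × Fin n → ℝ} (hy : y ∈ flowBox E c) {e : Fin n × Fin n}
    (he : e ∈ E) : |y e| ≤ c e := by
  have : y e ∈ Set.Icc (-c e) (c e) := by simpa [he] using hy e (Set.mem_univ e)
  exact abs_le.mpr this

lemma indicator_mem_flowBox {y : Fin n × Fin n → ℝ} (hy : ∀ e ∈ E, |y e| ≤ c e) :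
    Set.indicator (↑E) y ∈ flowBox E c := by
  intro e _
  by_cases he : e ∈ E
  · simpa [he] using abs_le.mp (hy e he)
  · simp [he]

lemma add_smul_single_mem_flowBox {y : Fin n × Fin n → ℝ} (hy : y ∈ flowBox E c)
    {e : Fin n × Fin n} (he : e ∈ E) {s : ℝ} (hs : y e + s ∈ Set.Icc (-c e) (c e)) :
    y + s • Pi.single e 1 ∈ flowBox E c := by
  intro e' _
  by_cases h : e' = e
  · subst h
    simpa [flowBox, he] using hs
  · simpa [Pi.single_apply, h] using hy e' (Set.mem_univ e')

end FlowBox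

section DualOptimum

variable {n : ℕ} (E : Finset (Fin n × Fin n)) (S : Finset (Fin n)) (α : ℝ)

lemma continuous_dualObj : Continuous (dualObj E S α) := by
  unfold dualObj divg
  fun_prop

lemma exists_isMaxOn_dualObj {c : Fin n × Fin n → ℝ} (hc : ∀ e ∈ E, 0 ≤ c e) :
    ∃ y ∈ flowBox E c, IsMaxOn (dualObj E S α) (flowBox E c) y :=
  (isCompact_flowBox E c).exists_isMaxOn
    ⟨_, indicator_mem_flowBox (y := 0) fun e he => by simpa using hc e he⟩
    (continuous_dualObj E S α).continuousOn

variable {E S α}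

lemma mul_sub_eq_mul_abs_of_isMaxOn (hα : 0 < α) {c y : Fin n × Fin n → ℝ}
    (hy : y ∈ flowBox E c) (hmax : IsMaxOn (dualObj E S α) (flowBox E c) y)
    {e : Fin n × Fin n} (he : e ∈ E) :
    y e * (recoverPrimal S α (divg E y) e.1 - recoverPrimal S α (divg E y) e.2)
      = c e * |recoverPrimal S α (divg E y) e.1 - recoverPrimal S α (divg E y) e.2| := by
  set x := recoverPrimal S α (divg E y)
  set z : Fin n × Fin n → ℝ := Pi.single e 1
  set κ := ∑ i ∈ S, divg E z i ^ 2 / 2 + ∑ i ∈ Sᶜ, divg E z i ^ 2 / (2 * α)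
  have hκ : 0 ≤ κ := add_nonneg (Finset.sum_nonneg fun i _ => by positivity)
    (Finset.sum_nonneg fun i _ => by positivity)
  have hslope : ∑ i, x i * divg E z i = x e.1 - x e.2 :=
    (sum_mul_divg E x z).trans (sum_single_mul_sub E he x)
  refine mul_eq_mul_abs_of_forall_Icc hκ (abs_le.mp (abs_le_of_mem_flowBox hy he)) fun t ht => ?_
  have hle := hmax (add_smul_single_mem_flowBox hy he (s := t - y e) (by simpa using ht))
  rw [Set.mem_ofPred_eq, dualObj_add_smul E S hα.ne', hslope] at hle
  linarith

end DualOptimum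

theorem nLasso_strong_duality_general
    (n : ℕ) (E : Finset (Fin n × Fin n))
    (W : Fin n × Fin n → ℝ) (hW : ∀ e ∈ E, 0 < W e)
    (S : Finset (Fin n))
    (α lam : ℝ) (hα : 0 < α) (hlam : 0 < lam) :
    ∃ xhat : Fin n → ℝ, ∃ yhat : Fin n × Fin n → ℝ,
      (∀ z : Fin n → ℝ, nLasso E W S α lam xhat ≤ nLasso E W S α lam z) ∧
      (∀ e ∈ E, |yhat e| ≤ lam * W e) ∧
      (∀ y : Fin n × Fin n → ℝ, (∀ e ∈ E, |y e| ≤ lam * W e) →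
        dualObj E S α y ≤ dualObj E S α yhat) ∧
      nLasso E W S α lam xhat = dualObj E S α yhat := by
  obtain ⟨yhat, hyhat, hmax⟩ :=
    exists_isMaxOn_dualObj E S α (c := fun e => lam * W e) fun e he => (mul_pos hlam (hW e he)).le
  have hfeas : ∀ e ∈ E, |yhat e| ≤ lam * W e := fun e he => abs_le_of_mem_flowBox hyhat he
  have hslack := Finset.sum_congr rfl fun e he => mul_sub_eq_mul_abs_of_isMaxOn hα hyhat hmax he
  have hgap : nLasso E W S α lam (recoverPrimal S α (divg E yhat)) = dualObj E S α yhat :=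
    nLasso_recoverPrimal_eq_dualObj E W S lam hα.ne' <| by
      rw [hslack, TV, Finset.mul_sum]
      exact Finset.sum_congr rfl fun e _ => mul_assoc _ _ _
  refine ⟨_, yhat, fun z => hgap ▸ dualObj_le_nLasso E W S lam hα hfeas z, hfeas,
    fun y hy => ?_, hgap⟩
  have hdivg : divg E (Set.indicator (↑E) y) = divg E y :=
    divg_congr E fun e he => Set.indicator_of_mem (Finset.mem_coe.mpr he) y
  calc dualObj E S α y = dualObj E S α (Set.indicator (↑E) y) := by simp only [dualObj, hdivg]
    _ ≤ dualObj E S α yhat := hmax (indicator_mem_flowBox hy)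

/-- Strong duality between nLasso and its flow-based dual: the primal minimum
and the dual maximum (over feasible flows) are both attained and are equal. -/
theorem nLasso_strong_duality
    (n : ℕ) (E : Finset (Fin n × Fin n)) (hE : ∀ e ∈ E, e.1 < e.2)
    (W : Fin n × Fin n → ℝ) (hW : ∀ e ∈ E, 0 < W e)
    (S : Finset (Fin n)) (hS : S.Nonempty)
    (α lam : ℝ) (hα : 0 < α) (hlam : 0 < lam) :
    ∃ xhat : Fin n → ℝ, ∃ yhat : Fin n × Fin n → ℝ,
      (∀ z : Fin n → ℝ, nLasso E W S α lam xhat ≤ nLasso E W S α lam z) ∧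
      (∀ e ∈ E, |yhat e| ≤ lam * W e) ∧
      (∀ y : Fin n × Fin n → ℝ, (∀ e ∈ E, |y e| ≤ lam * W e) →
        dualObj E S α y ≤ dualObj E S α yhat) ∧
      nLasso E W S α lam xhat = dualObj E S α yhat :=
  nLasso_strong_duality_general n E W hW S α lam hα hlam
end

section
/- Let x̂ minimize the nLasso objective h over ℝ^V, let C = {i ∈ V : x̂_i > 1/2} be the thresholded cluster, and assume S ⊆ C. Then the weighted boundary of C satisfies the exact identity λ Σ_{e∈∂C} W_e = α Σ_{i∉C} x̂_i. -/
open Finset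

/-! Shifting `x̂` by `t` on the nodes outside `C` leaves the seed terms unchanged (as `S ⊆ C`)
and, while `|t|` stays below the gap across the threshold `1/2`, shortens every boundary edge by
exactly `t`. Along this perturbation `h` is therefore the quadratic
`h(x̂) + t (α Σ_{i∉C} x̂_i - λ Σ_{e∈∂C} W_e) + t² α |Cᶜ| / 2`, and minimality of `x̂` at `t = 0`
forces its linear coefficient to vanish. -/

open Filter Topology

def shiftOutside {n : ℕ} (C : Finset (Fin n)) (x : Fin n → ℝ) (t : ℝ) : Fin n → ℝ :=
  fun i => if i ∈ C then x i else x i + t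

section Shift

variable {n : ℕ} {C : Finset (Fin n)} {x : Fin n → ℝ} {t : ℝ}

lemma abs_shiftOutside_sub (hgap : ∀ i ∈ C, ∀ j ∉ C, x j + |t| ≤ x i) (i j : Fin n) :
    |shiftOutside C x t i - shiftOutside C x t j| =
      |x i - x j| - if (i ∈ C ∧ j ∉ C) ∨ (i ∉ C ∧ j ∈ C) then t else 0 := by
  by_cases hi : i ∈ C <;> by_cases hj : j ∈ C
  · simp [shiftOutside, hi, hj]
  · have hij := hgap i hi j hj
    have ht := le_abs_self t
    have ht₀ := abs_nonneg t
    rw [shiftOutside, shiftOutside, if_pos hi, if_neg hj, if_pos (Or.inl ⟨hi, hj⟩),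
      abs_of_nonneg (by linarith), abs_of_nonneg (by linarith)]
    ring
  · have hji := hgap j hj i hi
    have ht := le_abs_self t
    have ht₀ := abs_nonneg t
    rw [shiftOutside, shiftOutside, if_neg hi, if_pos hj, if_pos (Or.inr ⟨hi, hj⟩),
      abs_of_nonpos (by linarith), abs_of_nonpos (by linarith)]
    ring
  · simp [shiftOutside, hi, hj]

lemma TV_shiftOutside (E : Finset (Fin n × Fin n)) (W : Fin n × Fin n → ℝ)
    (hgap : ∀ i ∈ C, ∀ j ∉ C, x j + |t| ≤ x i) :
    TV E W (shiftOutside C x t) = TV E W x - t * ∑ e ∈ bdry E C, W e := by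
  rw [TV, TV, bdry, sum_filter, mul_sum, ← sum_sub_distrib]
  refine sum_congr rfl fun e _ => ?_
  rw [abs_shiftOutside_sub hgap]
  split_ifs <;> ring

lemma sum_sq_shiftOutside (S : Finset (Fin n)) (α : ℝ) (hSC : S ⊆ C) :
    ∑ i ∈ Sᶜ, α * shiftOutside C x t i ^ 2 / 2 =
      ∑ i ∈ Sᶜ, α * x i ^ 2 / 2 + t * (α * ∑ i ∈ Cᶜ, x i) + t ^ 2 * (α * #Cᶜ / 2) := by
  have hsplit : ∀ i, α * shiftOutside C x t i ^ 2 / 2 =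
      α * x i ^ 2 / 2 + if i ∈ Cᶜ then t * (α * x i) + t ^ 2 * (α / 2) else 0 := by
    intro i
    by_cases hi : i ∈ C <;> simp [shiftOutside, hi]; ring
  rw [sum_congr rfl fun i _ => hsplit i, sum_add_distrib, sum_ite_mem,
    inter_eq_right.mpr (compl_subset_compl.mpr hSC), sum_add_distrib, ← mul_sum, ← mul_sum,
    sum_const, nsmul_eq_mul]
  ring

lemma nLasso_shiftOutside (E : Finset (Fin n × Fin n)) (W : Fin n × Fin n → ℝ)
    (S : Finset (Fin n)) (α lam : ℝ) (hSC : S ⊆ C)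
    (hgap : ∀ i ∈ C, ∀ j ∉ C, x j + |t| ≤ x i) :
    nLasso E W S α lam (shiftOutside C x t) = nLasso E W S α lam x
      + t * (α * ∑ i ∈ Cᶜ, x i - lam * ∑ e ∈ bdry E C, W e) + t ^ 2 * (α * #Cᶜ / 2) := by
  have hS : ∀ i ∈ S, shiftOutside C x t i = x i := fun i hi => if_pos (hSC hi)
  rw [nLasso, nLasso, sum_congr rfl fun i hi => by rw [hS i hi], sum_sq_shiftOutside S α hSC,
    TV_shiftOutside E W hgap]
  ring

lemma eventually_add_abs_le (hgap : ∀ i ∈ C, ∀ j ∉ C, x j < x i) :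
    ∀ᶠ t in 𝓝 (0 : ℝ), ∀ i ∈ C, ∀ j ∉ C, x j + |t| ≤ x i := by
  have habs : Tendsto (fun t : ℝ => |t|) (𝓝 0) (𝓝 0) := by
    simpa using (continuous_abs.tendsto (0 : ℝ))
  simp only [eventually_all]
  intro i hi j hj
  filter_upwards [habs.eventually (gt_mem_nhds (sub_pos.mpr (hgap i hi j hj)))] with t ht
  linarith

end Shift

lemma eq_zero_of_eventually_nonneg_mul_add_sq {A B : ℝ}
    (h : ∀ᶠ t in 𝓝 (0 : ℝ), 0 ≤ t * A + t ^ 2 * B) : A = 0 := by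
  have hmin : IsLocalMin (fun t : ℝ => t * A + t ^ 2 * B) 0 := by
    simpa [IsLocalMin, IsMinFilter] using h
  have hderiv : HasDerivAt (fun t : ℝ => t * A + t ^ 2 * B) A 0 :=
    (((hasDerivAt_id' 0).mul_const A).add ((hasDerivAt_pow 2 0).mul_const B)).congr_deriv
      (by norm_num)
  exact hmin.hasDerivAt_eq_zero hderiv

theorem weighted_boundary_eq_outside_mass_general
    (n : ℕ) (E : Finset (Fin n × Fin n))
    (W : Fin n × Fin n → ℝ)
    (S : Finset (Fin n))
    (α lam : ℝ)
    (xhat : Fin n → ℝ)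
    (hprimal : ∀ z : Fin n → ℝ, nLasso E W S α lam xhat ≤ nLasso E W S α lam z)
    (C : Finset (Fin n)) (hC : C = Finset.univ.filter (fun i => 1 / 2 < xhat i))
    (hSC : S ⊆ C) :
    lam * ∑ e ∈ bdry E C, W e = α * ∑ i ∈ Cᶜ, xhat i := by
  have hgap : ∀ i ∈ C, ∀ j ∉ C, xhat j < xhat i := by
    subst hC
    intro i hi j hj
    simp only [mem_filter, mem_univ, true_and, not_lt] at hi hj
    linarith
  have hfirst_order := eq_zero_of_eventually_nonneg_mul_add_sq
    (A := α * ∑ i ∈ Cᶜ, xhat i - lam * ∑ e ∈ bdry E C, W e) (B := α * #Cᶜ / 2) <|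
    (eventually_add_abs_le hgap).mono fun t ht => by
      have := hprimal (shiftOutside C xhat t)
      rw [nLasso_shiftOutside E W S α lam hSC ht] at this
      linarith
  linarith

/-- For the thresholded cluster `C = {i : x̂_i > 1/2}` of a nLasso minimizer
with `S ⊆ C`, the weighted boundary satisfies `λ ∑_{e∈∂C} W_e = α ∑_{i∉C} x̂_i`. -/
theorem weighted_boundary_eq_outside_mass
    (n : ℕ) (E : Finset (Fin n × Fin n)) (hE : ∀ e ∈ E, e.1 < e.2)
    (W : Fin n × Fin n → ℝ) (hW : ∀ e ∈ E, 0 < W e)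
    (S : Finset (Fin n)) (hS : S.Nonempty)
    (α lam : ℝ) (hα : 0 < α) (hlam : 0 < lam)
    (xhat : Fin n → ℝ)
    (hprimal : ∀ z : Fin n → ℝ, nLasso E W S α lam xhat ≤ nLasso E W S α lam z)
    (C : Finset (Fin n)) (hC : C = Finset.univ.filter (fun i => 1 / 2 < xhat i))
    (hSC : S ⊆ C) :
    lam * ∑ e ∈ bdry E C, W e = α * ∑ i ∈ Cᶜ, xhat i :=
  weighted_boundary_eq_outside_mass_general n E W S α lam xhat hprimal C hC hSC
end

section
/- (Proposition 1, first inequality.) Let x̂ minimize the nLasso objective h over ℝ^V, let C = {i ∈ V : x̂_i > 1/2} be the thresholded cluster, and assume S ⊆ C. Then λ Σ_{e∈∂C} W_e ≤ |S|/2 − (α/2) Σ_{i∈C∖S} x̂_i. -/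
open Finset

/-!
Lower `x̂` by `t > 0` on the cluster `C`. While `t` is below the gap between `C` and its
complement, every boundary edge loses exactly `t` of variation and no other edge changes,
so the objective changes by `t * A + t ^ 2 * B` with
`A = ∑_{S} (1 - x̂ᵢ) - α ∑_{C∖S} x̂ᵢ - λ ∑_{∂C} W_e`. Minimality of `x̂` forces `A ≥ 0`, and
`1 - x̂ᵢ < 1/2` on `S ⊆ C` turns this into the claim.
-/

open Filter Topology

noncomputable def shiftDownOn {n : ℕ} (C : Finset (Fin n)) (t : ℝ) (x : Fin n → ℝ)
    (i : Fin n) : ℝ :=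
  x i - if i ∈ C then t else 0

lemma nonneg_of_eventually_nonneg_mul_add_sq {a b : ℝ}
    (h : ∀ᶠ t in 𝓝[>] (0 : ℝ), 0 ≤ t * a + t ^ 2 * b) : 0 ≤ a := by
  have hlin : ∀ᶠ t in 𝓝[>] (0 : ℝ), 0 ≤ a + t * b := by
    filter_upwards [h, self_mem_nhdsWithin] with t ht (htpos : 0 < t)
    exact nonneg_of_mul_nonneg_right (by linarith) htpos
  have hlim : Tendsto (fun t : ℝ => a + t * b) (𝓝[>] 0) (𝓝 a) := by
    have hcont : Continuous fun t : ℝ => a + t * b := by fun_prop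
    exact (hcont.tendsto' 0 a (by simp)).mono_left nhdsWithin_le_nhds
  exact ge_of_tendsto hlim hlin

lemma eventually_forall_le_sub_of_superlevel {n : ℕ} (x : Fin n → ℝ) (c : ℝ) :
    ∀ᶠ t in 𝓝[>] (0 : ℝ), ∀ i ∈ univ.filter (fun i => c < x i),
      ∀ j ∉ univ.filter (fun i => c < x i), t ≤ x i - x j := by
  refine (eventually_all_finset _).2 fun i hi => Filter.eventually_all.2 fun j => ?_
  by_cases hj : j ∈ univ.filter (fun i => c < x i)
  · exact Filter.Eventually.of_forall fun _ h => absurd hj h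
  · simp only [mem_filter, mem_univ, true_and, not_lt] at hi hj
    filter_upwards [nhdsWithin_le_nhds (eventually_le_nhds (sub_pos.2 (hj.trans_lt hi)))]
      with t ht _ using ht

section shiftDownOn

variable {n : ℕ} {C : Finset (Fin n)} {t : ℝ} {x : Fin n → ℝ}

lemma abs_shiftDownOn_sub (ht : 0 ≤ t) (hgap : ∀ i ∈ C, ∀ j ∉ C, t ≤ x i - x j) (i j : Fin n) :
    |shiftDownOn C t x i - shiftDownOn C t x j|
      = |x i - x j| - if (i ∈ C ∧ j ∉ C) ∨ (i ∉ C ∧ j ∈ C) then t else 0 := by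
  by_cases hi : i ∈ C <;> by_cases hj : j ∈ C <;> simp only [shiftDownOn, hi, hj] <;> simp
  · have := hgap i hi j hj
    rw [abs_of_nonneg (by linarith), abs_of_nonneg (by linarith)]
    ring
  · have := hgap j hj i hi
    rw [abs_of_nonpos (by linarith), abs_of_nonpos (by linarith)]
    ring

lemma TV_shiftDownOn (E : Finset (Fin n × Fin n)) (W : Fin n × Fin n → ℝ)
    (ht : 0 ≤ t) (hgap : ∀ i ∈ C, ∀ j ∉ C, t ≤ x i - x j) :
    TV E W (shiftDownOn C t x) = TV E W x - t * ∑ e ∈ bdry E C, W e := by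
  rw [TV, TV, bdry, sum_filter, mul_comm t, sum_mul]
  simp only [abs_shiftDownOn_sub ht hgap, mul_sub, sum_sub_distrib, mul_ite, mul_zero, ite_mul,
    zero_mul]

lemma sum_seed_shiftDownOn {S : Finset (Fin n)} (hSC : S ⊆ C) :
    ∑ i ∈ S, (shiftDownOn C t x i - 1) ^ 2 / 2
      = ∑ i ∈ S, (x i - 1) ^ 2 / 2 + t * ∑ i ∈ S, (1 - x i) + t ^ 2 * S.card / 2 := by
  have hterm : ∀ i ∈ S, (shiftDownOn C t x i - 1) ^ 2 / 2
      = (x i - 1) ^ 2 / 2 + t * (1 - x i) + t ^ 2 / 2 := fun i hi => by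
    simp only [shiftDownOn, if_pos (hSC hi)]
    ring
  rw [sum_congr rfl hterm, sum_add_distrib, sum_add_distrib, sum_const, ← mul_sum,
    nsmul_eq_mul]
  ring

lemma sum_compl_shiftDownOn (S : Finset (Fin n)) (α : ℝ) :
    ∑ i ∈ Sᶜ, α * shiftDownOn C t x i ^ 2 / 2
      = ∑ i ∈ Sᶜ, α * x i ^ 2 / 2 - t * (α * ∑ i ∈ C \ S, x i)
        + t ^ 2 * (α * (C \ S).card) / 2 := by
  have hterm : ∀ i, α * shiftDownOn C t x i ^ 2 / 2 = α * x i ^ 2 / 2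
      - t * (if i ∈ C then α * x i else 0) + t ^ 2 * (if i ∈ C then α / 2 else 0) := by
    intro i
    by_cases hi : i ∈ C <;> simp only [shiftDownOn, hi, if_true, if_false] <;> ring
  have hCS : Sᶜ.filter (· ∈ C) = C \ S := by
    rw [filter_mem_eq_inter, sdiff_eq_inter_compl, inter_comm]
  simp only [hterm, sum_add_distrib, sum_sub_distrib, ← sum_filter, hCS, ← mul_sum,
    sum_const, nsmul_eq_mul]
  ring

lemma nLasso_shiftDownOn (E : Finset (Fin n × Fin n)) (W : Fin n × Fin n → ℝ)
    {S : Finset (Fin n)} (α lam : ℝ) (hSC : S ⊆ C) (ht : 0 ≤ t)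
    (hgap : ∀ i ∈ C, ∀ j ∉ C, t ≤ x i - x j) :
    nLasso E W S α lam (shiftDownOn C t x)
      = nLasso E W S α lam x
        + t * (∑ i ∈ S, (1 - x i) - α * ∑ i ∈ C \ S, x i - lam * ∑ e ∈ bdry E C, W e)
        + t ^ 2 * ((S.card + α * (C \ S).card) / 2) := by
  rw [nLasso, nLasso, sum_seed_shiftDownOn hSC, sum_compl_shiftDownOn,
    TV_shiftDownOn E W ht hgap]
  ring

end shiftDownOn

theorem prop1_first_inequality_general
    (n : ℕ) (E : Finset (Fin n × Fin n))
    (W : Fin n × Fin n → ℝ)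
    (S : Finset (Fin n))
    (α lam : ℝ) (hα : 0 < α)
    (xhat : Fin n → ℝ)
    (hprimal : ∀ z : Fin n → ℝ, nLasso E W S α lam xhat ≤ nLasso E W S α lam z)
    (C : Finset (Fin n)) (hC : C = Finset.univ.filter (fun i => 1 / 2 < xhat i))
    (hSC : S ⊆ C) :
    lam * ∑ e ∈ bdry E C, W e
      ≤ (S.card : ℝ) / 2 - (α / 2) * ∑ i ∈ C \ S, xhat i := by
  have hmem : ∀ i ∈ C, 1 / 2 < xhat i := fun i hi => by
    simpa [hC] using hi
  have hslope : 0 ≤ ∑ i ∈ S, (1 - xhat i) - α * ∑ i ∈ C \ S, xhat i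
      - lam * ∑ e ∈ bdry E C, W e := by
    refine nonneg_of_eventually_nonneg_mul_add_sq (b := (S.card + α * (C \ S).card) / 2) ?_
    filter_upwards [hC ▸ eventually_forall_le_sub_of_superlevel xhat (1 / 2),
      self_mem_nhdsWithin] with t hgap (ht : 0 < t)
    have := hprimal (shiftDownOn C t xhat)
    rw [nLasso_shiftDownOn E W α lam hSC ht.le hgap] at this
    linarith
  have hseed : ∑ i ∈ S, (1 - xhat i) ≤ S.card / 2 := by
    have := sum_le_card_nsmul S (fun i => 1 - xhat i) (1 / 2) fun i hi => by
      linarith [hmem i (hSC hi)]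
    rwa [nsmul_eq_mul, mul_one_div] at this
  have hrest : 0 ≤ ∑ i ∈ C \ S, xhat i :=
    sum_nonneg fun i hi => by linarith [hmem i (mem_sdiff.1 hi).1]
  linarith [mul_nonneg hα.le hrest]

/-- Proposition 1, first inequality: For the thresholded cluster
`C = {i : x̂_i > 1/2}` of a nLasso minimizer with `S ⊆ C`,
`λ ∑_{e∈∂C} W_e ≤ |S|/2 - (α/2) ∑_{i∈C∖S} x̂_i`. -/
theorem prop1_first_inequality
    (n : ℕ) (E : Finset (Fin n × Fin n)) (hE : ∀ e ∈ E, e.1 < e.2)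
    (W : Fin n × Fin n → ℝ) (hW : ∀ e ∈ E, 0 < W e)
    (S : Finset (Fin n)) (hS : S.Nonempty)
    (α lam : ℝ) (hα : 0 < α) (hlam : 0 < lam)
    (xhat : Fin n → ℝ)
    (hprimal : ∀ z : Fin n → ℝ, nLasso E W S α lam xhat ≤ nLasso E W S α lam z)
    (C : Finset (Fin n)) (hC : C = Finset.univ.filter (fun i => 1 / 2 < xhat i))
    (hSC : S ⊆ C) :
    lam * ∑ e ∈ bdry E C, W e
      ≤ (S.card : ℝ) / 2 - (α / 2) * ∑ i ∈ C \ S, xhat i :=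
  prop1_first_inequality_general n E W S α lam hα xhat hprimal C hC hSC
end

section
/- (Proposition 1, second inequality.) Let x̂ minimize the nLasso objective h over ℝ^V, let C = {i ∈ V : x̂_i > 1/2} be the thresholded cluster, and assume S ⊆ C. Then λ Σ_{e∈∂C} W_e ≤ α Σ_{i∉C} x̂_i. -/
/-!
Raise `x̂` by a small `t > 0` on every node outside `C`. While `t` stays below the gap
`x̂_i - x̂_j` between nodes `i ∈ C` and `j ∉ C` (positive, since they sit on opposite sides of
the threshold `1/2`), every boundary edge shrinks by exactly `t` and no other edge changes, so
the total variation drops by `t · W(∂C)`. Since `S ⊆ C`, only the terms `α x_i² / 2`, `i ∉ C`,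
move, and they grow by `t α Σ_{i ∉ C} x̂_i + O(t²)`. Minimality of `x̂` makes the net change
nonnegative; divide by `t` and let `t → 0⁺`.
-/

open Finset

open Filter Topology

section

variable {n : ℕ}

def liftOutside (C : Finset (Fin n)) (t : ℝ) (x : Fin n → ℝ) (i : Fin n) : ℝ :=
  if i ∈ C then x i else x i + t

section Lift

variable {C : Finset (Fin n)} {t : ℝ} {x : Fin n → ℝ}

theorem abs_sub_liftOutside (ht : 0 ≤ t) (hsep : ∀ i ∈ C, ∀ j ∉ C, x j + t ≤ x i)
    (i j : Fin n) :
    |liftOutside C t x i - liftOutside C t x j| =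
      |x i - x j| - if (i ∈ C ∧ j ∉ C) ∨ (i ∉ C ∧ j ∈ C) then t else 0 := by
  by_cases hi : i ∈ C <;> by_cases hj : j ∈ C
  · simp [liftOutside, hi, hj]
  · have := hsep i hi j hj
    simp only [liftOutside, hi, hj, if_true, if_false, not_false_eq_true, and_self, true_or]
    rw [abs_of_nonneg (by linarith), abs_of_nonneg (by linarith)]
    ring
  · have := hsep j hj i hi
    simp only [liftOutside, hi, hj, if_true, if_false, not_false_eq_true, and_self, or_true]
    rw [abs_sub_comm, abs_sub_comm (x i), abs_of_nonneg (by linarith),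
      abs_of_nonneg (by linarith)]
    ring
  · simp [liftOutside, hi, hj]

theorem TV_liftOutside (E : Finset (Fin n × Fin n)) (W : Fin n × Fin n → ℝ) (ht : 0 ≤ t)
    (hsep : ∀ i ∈ C, ∀ j ∉ C, x j + t ≤ x i) :
    TV E W (liftOutside C t x) = TV E W x - t * ∑ e ∈ bdry E C, W e := by
  simp only [TV, abs_sub_liftOutside ht hsep, mul_sub, mul_ite, mul_zero, sum_sub_distrib,
    bdry, sum_filter, mul_sum, mul_comm (W _) t]

theorem sum_sq_liftOutside {S : Finset (Fin n)} (hSC : S ⊆ C) (α : ℝ) :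
    ∑ i ∈ Sᶜ, α * liftOutside C t x i ^ 2 / 2 =
      ∑ i ∈ Sᶜ, α * x i ^ 2 / 2 + t * (α * ∑ i ∈ Cᶜ, x i + α * t * #Cᶜ / 2) := by
  have hpoint : ∀ i, α * liftOutside C t x i ^ 2 / 2 =
      α * x i ^ 2 / 2 + if i ∈ Cᶜ then t * α * x i + α * t ^ 2 / 2 else 0 := by
    intro i
    by_cases hi : i ∈ C
    · simp [liftOutside, hi]
    · simp [liftOutside, hi]
      ring
  rw [sum_congr rfl fun i _ => hpoint i, sum_add_distrib, sum_ite_mem,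
    inter_eq_right.2 (compl_subset_compl.2 hSC), sum_add_distrib, ← mul_sum, sum_const,
    nsmul_eq_mul]
  ring

theorem nLasso_liftOutside (E : Finset (Fin n × Fin n)) (W : Fin n × Fin n → ℝ)
    {S : Finset (Fin n)} (hSC : S ⊆ C) (α lam : ℝ) (ht : 0 ≤ t)
    (hsep : ∀ i ∈ C, ∀ j ∉ C, x j + t ≤ x i) :
    nLasso E W S α lam (liftOutside C t x) = nLasso E W S α lam x +
      t * (α * ∑ i ∈ Cᶜ, x i + α * t * #Cᶜ / 2 - lam * ∑ e ∈ bdry E C, W e) := by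
  have hseed : ∀ i ∈ S, liftOutside C t x i = x i := fun i hi => if_pos (hSC hi)
  simp only [nLasso, sum_congr rfl fun i hi => congrArg (fun y => (y - 1) ^ 2 / 2) (hseed i hi),
    sum_sq_liftOutside hSC, TV_liftOutside E W ht hsep]
  ring

end Lift

theorem eventually_gap_le {C : Finset (Fin n)} {x : Fin n → ℝ}
    (hsep : ∀ i ∈ C, ∀ j ∉ C, x j < x i) :
    ∀ᶠ t in 𝓝 (0 : ℝ), ∀ i ∈ C, ∀ j ∉ C, x j + t ≤ x i := by
  have hall : ∀ᶠ t in 𝓝 (0 : ℝ), ∀ i ∈ C, ∀ j ∈ Cᶜ, x j + t ≤ x i :=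
    (eventually_all_finset C).2 fun i hi => (eventually_all_finset Cᶜ).2 fun j hj =>
      (eventually_lt_nhds (sub_pos.2 (hsep i hi j (mem_compl.1 hj)))).mono fun t h => by
        linarith
  simpa only [mem_compl] using hall

theorem boundary_weight_le_of_minimizer {E : Finset (Fin n × Fin n)} {W : Fin n × Fin n → ℝ}
    {S C : Finset (Fin n)} {α lam : ℝ} {x : Fin n → ℝ}
    (hmin : ∀ z, nLasso E W S α lam x ≤ nLasso E W S α lam z) (hSC : S ⊆ C)
    {t : ℝ} (ht : 0 < t) (hsep : ∀ i ∈ C, ∀ j ∉ C, x j + t ≤ x i) :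
    lam * ∑ e ∈ bdry E C, W e ≤ α * ∑ i ∈ Cᶜ, x i + α * t * #Cᶜ / 2 := by
  have h := hmin (liftOutside C t x)
  rw [nLasso_liftOutside E W hSC α lam ht.le hsep, le_add_iff_nonneg_right,
    mul_nonneg_iff_of_pos_left ht] at h
  linarith

end

theorem prop1_second_inequality_general
    (n : ℕ) (E : Finset (Fin n × Fin n))
    (W : Fin n × Fin n → ℝ)
    (S : Finset (Fin n))
    (α lam : ℝ)
    (xhat : Fin n → ℝ)
    (hprimal : ∀ z : Fin n → ℝ, nLasso E W S α lam xhat ≤ nLasso E W S α lam z)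
    (C : Finset (Fin n)) (hC : C = Finset.univ.filter (fun i => 1 / 2 < xhat i))
    (hSC : S ⊆ C) :
    lam * ∑ e ∈ bdry E C, W e ≤ α * ∑ i ∈ Cᶜ, xhat i := by
  have hsep : ∀ i ∈ C, ∀ j ∉ C, xhat j < xhat i := by
    subst hC
    intro i hi j hj
    simp only [mem_filter, mem_univ, true_and] at hi hj
    linarith
  have hbound : ∀ᶠ t in 𝓝[>] (0 : ℝ),
      lam * ∑ e ∈ bdry E C, W e ≤ α * ∑ i ∈ Cᶜ, xhat i + α * t * #Cᶜ / 2 :=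
    ((eventually_nhdsWithin_of_eventually_nhds (eventually_gap_le hsep)).and
      self_mem_nhdsWithin).mono fun t ⟨hgap, ht⟩ => boundary_weight_le_of_minimizer hprimal hSC ht hgap
  have hlim : Tendsto (fun t : ℝ => α * ∑ i ∈ Cᶜ, xhat i + α * t * #Cᶜ / 2) (𝓝[>] 0)
      (𝓝 (α * ∑ i ∈ Cᶜ, xhat i)) :=
    tendsto_nhdsWithin_of_tendsto_nhds (Continuous.tendsto' (by fun_prop) _ _ (by simp))
  exact ge_of_tendsto hlim hbound

/-- Proposition 1, second inequality: For the thresholded cluster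
`C = {i : x̂_i > 1/2}` of a nLasso minimizer with `S ⊆ C`,
`λ ∑_{e∈∂C} W_e ≤ α ∑_{i∉C} x̂_i`. -/
theorem prop1_second_inequality
    (n : ℕ) (E : Finset (Fin n × Fin n)) (hE : ∀ e ∈ E, e.1 < e.2)
    (W : Fin n × Fin n → ℝ) (hW : ∀ e ∈ E, 0 < W e)
    (S : Finset (Fin n)) (hS : S.Nonempty)
    (α lam : ℝ) (hα : 0 < α) (hlam : 0 < lam)
    (xhat : Fin n → ℝ)
    (hprimal : ∀ z : Fin n → ℝ, nLasso E W S α lam xhat ≤ nLasso E W S α lam z)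
    (C : Finset (Fin n)) (hC : C = Finset.univ.filter (fun i => 1 / 2 < xhat i))
    (hSC : S ⊆ C) :
    lam * ∑ e ∈ bdry E C, W e ≤ α * ∑ i ∈ Cᶜ, xhat i :=
  prop1_second_inequality_general n E W S α lam xhat hprimal C hC hSC
end

section
/- There exists a critical value λ₀ > 0 (depending on G, S and α) such that for every λ ≥ λ₀ the unique minimizer x̂ of the nLasso objective h is constant on each connected component of G; moreover, on a connected component K the constant value equals |S ∩ K| / (|S ∩ K| + α |K ∖ S|). -/
/-!
On signals that are constant on every connected component, the quadratic part of the objective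
is minimized by the signal `c` whose value on a component `K` is
`|S ∩ K| / (|S ∩ K| + α |K \ S|)`; hence its gradient `g` at `c` sums to zero over each
component. The pairing `⟪g, u⟫` therefore only sees differences of `u` inside components, and
bounding these along shortest paths gives `|⟪g, u⟫| ≤ λ₀ TV(u)`. Expanding the objective around
`c`, which has zero total variation, yields `h(z) ≥ h(c) + ½ ∑ᵢ wᵢ (zᵢ - cᵢ)² + (λ - λ₀) TV(z)`
with weights `wᵢ ∈ {1, α}`, so for `λ ≥ λ₀` every minimizer equals `c`.
-/

open Finset

/-- Reachability in the (undirected) graph with oriented edge set `E`. -/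
def Reach {n : ℕ} (E : Finset (Fin n × Fin n)) : Fin n → Fin n → Prop :=
  Relation.ReflTransGen (fun i j => (i, j) ∈ E ∨ (j, i) ∈ E)

namespace SimpleGraph

variable {V : Type*} {G : SimpleGraph V} {u : V → ℝ} {B : ℝ}

theorem Walk.abs_sub_le_length_mul (hadj : ∀ a b, G.Adj a b → |u a - u b| ≤ B) {i j : V}
    (p : G.Walk i j) : |u i - u j| ≤ p.length * B := by
  induction p with
  | nil => simp
  | @cons a b c h p ih =>
    rw [Walk.length_cons, Nat.cast_succ]
    linarith [abs_sub_le (u a) (u b) (u c), hadj a b h]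

theorem Reachable.abs_sub_le_card_mul [Fintype V] (hB : 0 ≤ B)
    (hadj : ∀ a b, G.Adj a b → |u a - u b| ≤ B) {i j : V} (h : G.Reachable i j) :
    |u i - u j| ≤ Fintype.card V * B := by
  classical
  obtain ⟨p⟩ := h
  calc |u i - u j| ≤ (p.toPath : G.Walk i j).length * B := Walk.abs_sub_le_length_mul hadj _
    _ ≤ Fintype.card V * B := by
      gcongr
      exact_mod_cast p.toPath.2.length_lt.le

end SimpleGraph

namespace NetworkLasso

variable {n : ℕ} {E : Finset (Fin n × Fin n)} {W : Fin n × Fin n → ℝ} {S : Finset (Fin n)}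
  {α : ℝ}

def graph (E : Finset (Fin n × Fin n)) : SimpleGraph (Fin n) :=
  SimpleGraph.fromEdgeSet
    (Sym2.fromRel (r := fun i j => (i, j) ∈ E ∨ (j, i) ∈ E) ⟨fun _ _ h => h.symm⟩)

theorem reach_iff_reachable {i j : Fin n} : Reach E i j ↔ (graph E).Reachable i j := by
  rw [graph, SimpleGraph.reachable_fromEdgeSet_fromRel_eq_reflTransGen]
  rfl

theorem _root_.Reach.symm {i j : Fin n} (h : Reach E i j) : Reach E j i :=
  reach_iff_reachable.2 (reach_iff_reachable.1 h).symm

theorem _root_.Reach.trans {i j k : Fin n} (hij : Reach E i j) (hjk : Reach E j k) : Reach E i k :=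
  Relation.ReflTransGen.trans hij hjk

open Classical in
noncomputable def component (E : Finset (Fin n × Fin n)) (i : Fin n) : Finset (Fin n) :=
  {j | Reach E i j}

@[simp]
theorem mem_component {i j : Fin n} : j ∈ component E i ↔ Reach E i j := by
  simp [component]

theorem coe_component (i : Fin n) : (component E i : Set (Fin n)) = {j | Reach E i j} := by
  ext; simp

theorem self_mem_component (i : Fin n) : i ∈ component E i :=
  mem_component.2 .refl

theorem component_eq_of_reach {i j : Fin n} (h : Reach E i j) : component E i = component E j := by
  ext k
  simp only [mem_component]
  exact ⟨h.symm.trans, h.trans⟩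

theorem component_eq_component_iff {i j : Fin n} :
    component E i = component E j ↔ Reach E i j :=
  ⟨fun h => mem_component.1 (h ▸ self_mem_component j), component_eq_of_reach⟩

theorem sum_mul_eq_zero_of_sum_component_eq_zero {g φ : Fin n → ℝ}
    (hg : ∀ i, ∑ j ∈ component E i, g j = 0) (hφ : ∀ i j, Reach E i j → φ i = φ j) :
    ∑ i, g i * φ i = 0 := by
  rw [← sum_fiberwise univ (component E)]
  refine sum_eq_zero fun K _ => ?_
  rcases eq_empty_or_nonempty ({i | component E i = K} : Finset (Fin n)) with hK | ⟨i₀, hi₀⟩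
  · rw [hK, sum_empty]
  have hfiber : ({i | component E i = K} : Finset (Fin n)) = component E i₀ := by
    ext i
    simp only [mem_filter_univ] at hi₀ ⊢
    rw [← hi₀, component_eq_component_iff, mem_component]
    exact ⟨Reach.symm, Reach.symm⟩
  rw [hfiber, sum_congr rfl fun i hi => by rw [← hφ i₀ i (mem_component.1 hi)], ← sum_mul,
    hg, zero_mul]

theorem TV_nonneg (hW : ∀ e ∈ E, 0 < W e) (u : Fin n → ℝ) : 0 ≤ TV E W u :=
  sum_nonneg fun e he => mul_nonneg (hW e he).le (abs_nonneg _)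

theorem TV_sub_eq (c z : Fin n → ℝ) (hc : ∀ e ∈ E, c e.1 = c e.2) :
    TV E W (fun i => z i - c i) = TV E W z :=
  sum_congr rfl fun e he => by simp only [hc e he, sub_sub_sub_cancel_right]

theorem TV_eq_zero (c : Fin n → ℝ) (hc : ∀ e ∈ E, c e.1 = c e.2) : TV E W c = 0 :=
  sum_eq_zero fun e he => by simp [hc e he]

theorem abs_sub_le_TV_of_mem (hW : ∀ e ∈ E, 0 < W e) (u : Fin n → ℝ) {a b : Fin n}
    (hab : (a, b) ∈ E) : |u a - u b| ≤ (∑ e ∈ E, (W e)⁻¹) * TV E W u := by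
  have hterm : W (a, b) * |u a - u b| ≤ TV E W u :=
    single_le_sum (f := fun e => W e * |u e.1 - u e.2|)
      (fun e he => mul_nonneg (hW e he).le (abs_nonneg _)) hab
  have hinv : (W (a, b))⁻¹ ≤ ∑ e ∈ E, (W e)⁻¹ :=
    single_le_sum (f := fun e => (W e)⁻¹) (fun e he => (inv_pos.2 (hW e he)).le) hab
  calc |u a - u b| ≤ (W (a, b))⁻¹ * TV E W u := by
        rw [inv_mul_eq_div, le_div_iff₀ (hW _ hab), mul_comm]; exact hterm
    _ ≤ (∑ e ∈ E, (W e)⁻¹) * TV E W u := by gcongr; exact TV_nonneg hW u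

theorem _root_.Reach.abs_sub_le_TV (hW : ∀ e ∈ E, 0 < W e) (u : Fin n → ℝ) {i j : Fin n}
    (h : Reach E i j) : |u i - u j| ≤ n * ((∑ e ∈ E, (W e)⁻¹) * TV E W u) := by
  have hB : 0 ≤ (∑ e ∈ E, (W e)⁻¹) * TV E W u :=
    mul_nonneg (sum_nonneg fun e he => (inv_pos.2 (hW e he)).le) (TV_nonneg hW u)
  simpa using (reach_iff_reachable.1 h).abs_sub_le_card_mul hB fun a b hab => by
    rcases (SimpleGraph.fromEdgeSet_adj _).1 hab with ⟨hab | hba, -⟩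
    · exact abs_sub_le_TV_of_mem hW u hab
    · rw [abs_sub_comm]; exact abs_sub_le_TV_of_mem hW u hba

noncomputable def rep (E : Finset (Fin n × Fin n)) (i : Fin n) : Fin n :=
  (component E i).min' ⟨i, self_mem_component i⟩

theorem reach_rep (i : Fin n) : Reach E i (rep E i) :=
  mem_component.1 (min'_mem _ _)

theorem rep_eq_of_reach {i j : Fin n} (h : Reach E i j) : rep E i = rep E j := by
  simp only [rep, component_eq_of_reach h]

theorem abs_sum_mul_le_TV (hW : ∀ e ∈ E, 0 < W e) {g : Fin n → ℝ}
    (hg : ∀ i, ∑ j ∈ component E i, g j = 0) (u : Fin n → ℝ) :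
    |∑ i, g i * u i| ≤ (∑ i, |g i|) * (n * ∑ e ∈ E, (W e)⁻¹) * TV E W u := by
  have hrep : ∑ i, g i * u (rep E i) = 0 :=
    sum_mul_eq_zero_of_sum_component_eq_zero hg fun i j h => by rw [rep_eq_of_reach h]
  calc |∑ i, g i * u i| = |∑ i, g i * (u i - u (rep E i))| := by
        simp only [mul_sub, sum_sub_distrib, hrep, sub_zero]
    _ ≤ ∑ i, |g i| * |u i - u (rep E i)| := by
        simpa only [abs_mul] using abs_sum_le_sum_abs (fun i => g i * (u i - u (rep E i))) univ
    _ ≤ ∑ i, |g i| * (n * ((∑ e ∈ E, (W e)⁻¹) * TV E W u)) := by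
        gcongr with i
        exact (reach_rep i).abs_sub_le_TV hW u
    _ = (∑ i, |g i|) * (n * ∑ e ∈ E, (W e)⁻¹) * TV E W u := by rw [← sum_mul]; ring

noncomputable def fidelity (S : Finset (Fin n)) (α : ℝ) (i : Fin n) (t : ℝ) : ℝ :=
  if i ∈ S then (t - 1) ^ 2 / 2 else α * t ^ 2 / 2

def fidelityDeriv (S : Finset (Fin n)) (α : ℝ) (i : Fin n) (t : ℝ) : ℝ :=
  if i ∈ S then t - 1 else α * t

def fidelityWeight (S : Finset (Fin n)) (α : ℝ) (i : Fin n) : ℝ :=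
  if i ∈ S then 1 else α

theorem fidelity_eq_taylor (i : Fin n) (s t : ℝ) :
    fidelity S α i t = fidelity S α i s + fidelityDeriv S α i s * (t - s)
      + fidelityWeight S α i * (t - s) ^ 2 / 2 := by
  simp only [fidelity, fidelityDeriv, fidelityWeight]
  split_ifs <;> ring

theorem nLasso_eq_sum_fidelity (lam : ℝ) (x : Fin n → ℝ) :
    nLasso E W S α lam x = ∑ i, fidelity S α i (x i) + lam * TV E W x := by
  rw [nLasso, ← sum_add_sum_compl S]
  congr 2
  · exact sum_congr rfl fun i hi => (if_pos hi).symm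
  · exact sum_congr rfl fun i hi => (if_neg (mem_compl.1 hi)).symm

theorem fidelityWeight_pos (hα : 0 < α) (i : Fin n) : 0 < fidelityWeight S α i := by
  unfold fidelityWeight
  split_ifs <;> positivity

noncomputable def componentValue (E : Finset (Fin n × Fin n)) (S : Finset (Fin n)) (α : ℝ)
    (i : Fin n) : ℝ :=
  #(S ∩ component E i) / (#(S ∩ component E i) + α * #(component E i \ S))

theorem componentValue_eq_of_reach {i j : Fin n} (h : Reach E i j) :
    componentValue E S α i = componentValue E S α j := by
  simp only [componentValue, component_eq_of_reach h]

theorem card_inter_add_mul_card_sdiff_pos (hα : 0 < α) (K : Finset (Fin n)) {i : Fin n}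
    (hi : i ∈ K) : (0 : ℝ) < #(S ∩ K) + α * #(K \ S) := by
  by_cases hiS : i ∈ S
  · have : 0 < #(S ∩ K) := card_pos.2 ⟨i, mem_inter.2 ⟨hiS, hi⟩⟩
    positivity
  · have : 0 < #(K \ S) := card_pos.2 ⟨i, mem_sdiff.2 ⟨hi, hiS⟩⟩
    positivity

theorem sum_component_fidelityDeriv_componentValue (hα : 0 < α) (i : Fin n) :
    ∑ j ∈ component E i, fidelityDeriv S α j (componentValue E S α j) = 0 := by
  set K := component E i
  set c := componentValue E S α i with hc
  have hden := card_inter_add_mul_card_sdiff_pos hα K (self_mem_component i) (S := S)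
  calc ∑ j ∈ K, fidelityDeriv S α j (componentValue E S α j)
      = ∑ j ∈ K, (if j ∈ S then c - 1 else α * c) :=
        sum_congr rfl fun j hj => by
          rw [fidelityDeriv, componentValue_eq_of_reach (mem_component.1 hj).symm]
    _ = #(S ∩ K) * (c - 1) + #(K \ S) * (α * c) := by
        rw [sum_ite, sum_const, sum_const, nsmul_eq_mul, nsmul_eq_mul, filter_mem_eq_inter,
          inter_comm, filter_notMem_eq_sdiff]
    _ = c * (#(S ∩ K) + α * #(K \ S)) - #(S ∩ K) := by ring
    _ = 0 := by rw [hc, componentValue, div_mul_cancel₀ _ hden.ne', sub_self]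

noncomputable def criticalLambda (E : Finset (Fin n × Fin n)) (W : Fin n × Fin n → ℝ)
    (S : Finset (Fin n)) (α : ℝ) : ℝ :=
  (∑ i, |fidelityDeriv S α i (componentValue E S α i)|) * (n * ∑ e ∈ E, (W e)⁻¹)

theorem criticalLambda_nonneg (hW : ∀ e ∈ E, 0 < W e) : 0 ≤ criticalLambda E W S α :=
  mul_nonneg (sum_nonneg fun _ _ => abs_nonneg _)
    (mul_nonneg n.cast_nonneg (sum_nonneg fun e he => (inv_pos.2 (hW e he)).le))

theorem nLasso_componentValue_add_le (hW : ∀ e ∈ E, 0 < W e) (hα : 0 < α) {lam : ℝ}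
    (hlam : criticalLambda E W S α ≤ lam) (z : Fin n → ℝ) :
    nLasso E W S α lam (componentValue E S α)
        + ∑ i, fidelityWeight S α i * (z i - componentValue E S α i) ^ 2 / 2
      ≤ nLasso E W S α lam z := by
  set c := componentValue E S α
  have hc : ∀ e ∈ E, c e.1 = c e.2 := fun e he => componentValue_eq_of_reach (.single (.inl he))
  have hlinear : |∑ i, fidelityDeriv S α i (c i) * (z i - c i)|
      ≤ criticalLambda E W S α * TV E W z := by
    have := abs_sum_mul_le_TV hW (sum_component_fidelityDeriv_componentValue (S := S) hα)
      fun i => z i - c i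
    rwa [TV_sub_eq c z hc] at this
  have htaylor : ∑ i, fidelity S α i (z i) = ∑ i, fidelity S α i (c i)
      + ∑ i, fidelityDeriv S α i (c i) * (z i - c i)
      + ∑ i, fidelityWeight S α i * (z i - c i) ^ 2 / 2 := by
    rw [← sum_add_distrib, ← sum_add_distrib]
    exact sum_congr rfl fun i _ => fidelity_eq_taylor i (c i) (z i)
  rw [nLasso_eq_sum_fidelity, nLasso_eq_sum_fidelity, TV_eq_zero c hc, htaylor]
  linarith [mul_le_mul_of_nonneg_right hlam (TV_nonneg hW z), neg_abs_le
    (∑ i, fidelityDeriv S α i (c i) * (z i - c i))]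

theorem eq_componentValue_of_forall_nLasso_le (hW : ∀ e ∈ E, 0 < W e) (hα : 0 < α) {lam : ℝ}
    (hlam : criticalLambda E W S α ≤ lam) {x : Fin n → ℝ}
    (hmin : ∀ z, nLasso E W S α lam x ≤ nLasso E W S α lam z) :
    x = componentValue E S α := by
  have hterm_nonneg (i : Fin n) :
      0 ≤ fidelityWeight S α i * (x i - componentValue E S α i) ^ 2 / 2 := by
    have := fidelityWeight_pos hα i (S := S)
    positivity
  have hsum : ∑ i, fidelityWeight S α i * (x i - componentValue E S α i) ^ 2 / 2 = 0 :=
    le_antisymm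
      (by linarith [nLasso_componentValue_add_le hW hα hlam x, hmin (componentValue E S α)])
      (sum_nonneg fun i _ => hterm_nonneg i)
  funext i
  have := (sum_eq_zero_iff_of_nonneg fun i _ => hterm_nonneg i).1 hsum i (mem_univ i)
  simpa [(fidelityWeight_pos hα i).ne', sub_eq_zero] using this

end NetworkLasso

open NetworkLasso in
theorem exists_critical_lambda_constant_on_components_general
    (n : ℕ) (E : Finset (Fin n × Fin n))
    (W : Fin n × Fin n → ℝ) (hW : ∀ e ∈ E, 0 < W e)
    (S : Finset (Fin n)) (α : ℝ) (hα : 0 < α) :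
    ∃ lam₀ : ℝ, 0 < lam₀ ∧ ∀ lam : ℝ, lam₀ ≤ lam →
      ∀ xhat : Fin n → ℝ,
        (∀ z : Fin n → ℝ, nLasso E W S α lam xhat ≤ nLasso E W S α lam z) →
        (∀ i j : Fin n, Reach E i j → xhat i = xhat j) ∧
        (∀ i : Fin n,
          xhat i =
            (((S : Set (Fin n)) ∩ {j | Reach E i j}).ncard : ℝ) /
              ((((S : Set (Fin n)) ∩ {j | Reach E i j}).ncard : ℝ) +
                α * (({j | Reach E i j} \ (S : Set (Fin n))).ncard : ℝ))) := by
  refine ⟨criticalLambda E W S α + 1, by linarith [criticalLambda_nonneg hW (S := S) (α := α)],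
    fun lam hlam xhat hmin => ?_⟩
  obtain rfl := eq_componentValue_of_forall_nLasso_le hW hα (by linarith) hmin
  refine ⟨fun i j h => componentValue_eq_of_reach h, fun i => ?_⟩
  rw [← coe_component, ← coe_inter, ← coe_sdiff, Set.ncard_coe_finset, Set.ncard_coe_finset]
  rfl

/-- There is a critical value `λ₀ > 0` such that for every `λ ≥ λ₀` the unique
nLasso minimizer is constant on each connected component of `G`, with constant value
`|S ∩ K| / (|S ∩ K| + α |K ∖ S|)` on a connected component `K`. -/
theorem exists_critical_lambda_constant_on_components
    (n : ℕ) (E : Finset (Fin n × Fin n)) (hE : ∀ e ∈ E, e.1 < e.2)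
    (W : Fin n × Fin n → ℝ) (hW : ∀ e ∈ E, 0 < W e)
    (S : Finset (Fin n)) (hS : S.Nonempty) (α : ℝ) (hα : 0 < α) :
    ∃ lam₀ : ℝ, 0 < lam₀ ∧ ∀ lam : ℝ, lam₀ ≤ lam →
      ∀ xhat : Fin n → ℝ,
        (∀ z : Fin n → ℝ, nLasso E W S α lam xhat ≤ nLasso E W S α lam z) →
        (∀ i j : Fin n, Reach E i j → xhat i = xhat j) ∧
        (∀ i : Fin n,
          xhat i =
            (((S : Set (Fin n)) ∩ {j | Reach E i j}).ncard : ℝ) /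
              ((((S : Set (Fin n)) ∩ {j | Reach E i j}).ncard : ℝ) +
                α * (({j | Reach E i j} \ (S : Set (Fin n))).ncard : ℝ))) :=
  exists_critical_lambda_constant_on_components_general n E W hW S α hα
end
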